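/- arXiv:2203.11521 — 6 statements merged into one kernel-verified Lean document; each statement's English description precedes it below -/
import Mathlib

section
/- Let S1 and S2 be sets of integers with |S1| >= 4 and |S2| >= 3, and let a1, a2, b1, b2, c be arbitrary integers. Then there exist x1 in S1 and x2 in S2 such that x1 + x2 ≠ a1, x1 + x2 ≠ a2, x2 ≠ b1, x1 ≠ b2, and x1 - x2 ≠ c. -/
theorem stmt_5 (S1 S2 : Finset ℤ) (h1 : 4 ≤ S1.card) (h2 : 3 ≤ S2.card)
    (a1 a2 b1 b2 c : ℤ) :
    ∃ x1 ∈ S1, ∃ x2 ∈ S2,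
      x1 + x2 ≠ a1 ∧ x1 + x2 ≠ a2 ∧ x2 ≠ b1 ∧ x1 ≠ b2 ∧ x1 - x2 ≠ c := by
  by_contra hcon
  push_neg at hcon
  -- get two distinct elements of S2, both ≠ b1
  have hc2 : 2 ≤ (S2.erase b1).card := by
    have := Finset.pred_card_le_card_erase (s := S2) (a := b1)
    omega
  obtain ⟨t, ht, u, hu, htu⟩ := Finset.one_lt_card.mp (by omega : 1 < (S2.erase b1).card)
  have ht1 : t ≠ b1 := Finset.ne_of_mem_erase ht
  have hu1 : u ≠ b1 := Finset.ne_of_mem_erase hu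
  have ht2 : t ∈ S2 := Finset.mem_of_mem_erase ht
  have hu2 : u ∈ S2 := Finset.mem_of_mem_erase hu
  -- key: for any such x2, S1 equals the bad set, hence its sum is determined
  have key : ∀ x2 : ℤ, x2 ∈ S2 → x2 ≠ b1 →
      ∑ x ∈ S1, x = b2 + a1 + a2 + c - x2 := by
    intro x2 hx2 hb1
    set B : Finset ℤ := {b2, a1 - x2, a2 - x2, c + x2} with hB
    have hsub : S1 ⊆ B := by
      intro x1 hx1
      simp only [hB, Finset.mem_insert, Finset.mem_singleton]
      rcases eq_or_ne (x1 + x2) a1 with h | h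
      · right; left; omega
      rcases eq_or_ne (x1 + x2) a2 with h' | h'
      · right; right; left; omega
      rcases eq_or_ne x1 b2 with h'' | h''
      · left; exact h''
      have := hcon x1 hx1 x2 hx2 h h' hb1 h''
      right; right; right; omega
    have hcardB : B.card ≤ 4 := by
      simp only [hB]
      apply le_trans (Finset.card_insert_le _ _)
      have : ({a1 - x2, a2 - x2, c + x2} : Finset ℤ).card ≤ 3 := by
        apply le_trans (Finset.card_insert_le _ _)
        have := Finset.card_insert_le (a2 - x2) ({c + x2} : Finset ℤ)
        simp at this ⊢
        omega
      omega
    have hcard1 : S1.card ≤ B.card := Finset.card_le_card hsub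
    have heq : S1 = B := Finset.eq_of_subset_of_card_le hsub (by omega)
    have hB4 : B.card = 4 := by omega
    -- distinctness
    have d1 : b2 ∉ ({a1 - x2, a2 - x2, c + x2} : Finset ℤ) := by
      intro h
      have : B = ({a1 - x2, a2 - x2, c + x2} : Finset ℤ) := by
        simp only [hB]; exact Finset.insert_eq_self.mpr h
      rw [this] at hB4
      have : ({a1 - x2, a2 - x2, c + x2} : Finset ℤ).card ≤ 3 := by
        apply le_trans (Finset.card_insert_le _ _)
        have := Finset.card_insert_le (a2 - x2) ({c + x2} : Finset ℤ)
        simp at this ⊢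
        omega
      omega
    have d2 : a1 - x2 ∉ ({a2 - x2, c + x2} : Finset ℤ) := by
      intro h
      have hE : ({a1 - x2, a2 - x2, c + x2} : Finset ℤ) = {a2 - x2, c + x2} :=
        Finset.insert_eq_self.mpr h
      have : B.card ≤ 3 := by
        simp only [hB, hE]
        apply le_trans (Finset.card_insert_le _ _)
        have := Finset.card_insert_le (a2 - x2) ({c + x2} : Finset ℤ)
        simp at this ⊢
        omega
      omega
    have d3 : a2 - x2 ∉ ({c + x2} : Finset ℤ) := by
      intro h
      have hE : ({a2 - x2, c + x2} : Finset ℤ) = {c + x2} :=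
        Finset.insert_eq_self.mpr h
      have : B.card ≤ 3 := by
        simp only [hB, hE]
        apply le_trans (Finset.card_insert_le _ _)
        have := Finset.card_insert_le (a1 - x2) ({c + x2} : Finset ℤ)
        simp at this ⊢
        omega
      omega
    rw [heq, hB]
    rw [Finset.sum_insert d1, Finset.sum_insert d2, Finset.sum_insert d3,
      Finset.sum_singleton]
    ring
  have e1 := key t ht2 ht1
  have e2 := key u hu2 hu1
  omega
end

section
/- Let S1, S2, S3, S4 be sets of integers with |S1| >= 3, |S2| >= 2, |S3| >= 3, |S4| >= 1, and let a1, a2, a3, a4 be arbitrary integers. Then there exist x_i in S_i (i = 1,...,4) such that x2+x3+x4 ≠ a1, x1+x3+x4 ≠ a2, x1+x2+x4 ≠ a3, x1+x2+x3 ≠ a4, and x3 ≠ x4. -/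
lemma sum_three_of_cover (S : Finset ℤ) (h : 3 ≤ S.card) (y1 y2 y3 : ℤ)
    (hall : ∀ x ∈ S, x = y1 ∨ x = y2 ∨ x = y3) : S.sum id = y1 + y2 + y3 := by
  have hsub : S ⊆ ({y1, y2, y3} : Finset ℤ) := by
    intro x hx
    rcases hall x hx with rfl | rfl | rfl <;> simp
  have hcard3 : ({y1, y2, y3} : Finset ℤ).card ≤ 3 := by
    apply le_trans (Finset.card_insert_le _ _)
    simp [Finset.card_insert_le]
    exact Nat.lt_of_le_of_lt (Finset.card_insert_le _ _) (by simp)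
  have hle : ({y1, y2, y3} : Finset ℤ).card ≤ S.card := by
    have := Finset.card_le_card hsub
    omega
  have hS : S = ({y1, y2, y3} : Finset ℤ) :=
    Finset.eq_of_subset_of_card_le hsub hle
  have hc : ({y1, y2, y3} : Finset ℤ).card = 3 := by
    have := Finset.card_le_card hsub
    omega
  have h12 : y1 ≠ y2 := by
    rintro rfl
    have : ({y1, y1, y3} : Finset ℤ).card ≤ 2 := by
      simp
      exact Finset.card_insert_le _ _
    omega
  have h13 : y1 ≠ y3 := by
    rintro rfl
    have he : ({y1, y2, y1} : Finset ℤ) = {y1, y2} := by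
      ext x; simp; tauto
    have : ({y1, y2} : Finset ℤ).card ≤ 2 := by
      simpa using Finset.card_insert_le y1 {y2}
    rw [he] at hc
    omega
  have h23 : y2 ≠ y3 := by
    rintro rfl
    have : ({y1, y2, y2} : Finset ℤ).card ≤ 2 := by
      simp
      exact Finset.card_insert_le _ _
    omega
  rw [hS]
  rw [Finset.sum_insert (by simp [h12, h13]), Finset.sum_insert (by simp [h23])]
  simp [add_assoc]

theorem stmt_6 (S1 S2 S3 S4 : Finset ℤ)
    (h1 : 3 ≤ S1.card) (h2 : 2 ≤ S2.card) (h3 : 3 ≤ S3.card) (h4 : 1 ≤ S4.card)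
    (a1 a2 a3 a4 : ℤ) :
    ∃ x1 ∈ S1, ∃ x2 ∈ S2, ∃ x3 ∈ S3, ∃ x4 ∈ S4,
      x2 + x3 + x4 ≠ a1 ∧ x1 + x3 + x4 ≠ a2 ∧ x1 + x2 + x4 ≠ a3 ∧
      x1 + x2 + x3 ≠ a4 ∧ x3 ≠ x4 := by
  -- pick x4 = c
  obtain ⟨c, hc⟩ := Finset.card_pos.mp (by omega : 0 < S4.card)
  -- pick u ≠ v in S3, both ≠ c
  have hErase : 2 ≤ (S3.erase c).card := by
    have := Finset.pred_card_le_card_erase (a := c) (s := S3)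
    omega
  obtain ⟨u, hu', v, hv', huv⟩ := Finset.one_lt_card.mp
    (show 1 < (S3.erase c).card by omega)
  obtain ⟨huc, hu⟩ := Finset.mem_erase.mp hu'
  obtain ⟨hvc, hv⟩ := Finset.mem_erase.mp hv'
  -- pick p ≠ q in S2
  obtain ⟨p, hp, q, hq, hpq⟩ := Finset.one_lt_card.mp (by omega : 1 < S2.card)
  by_contra hcon
  push_neg at hcon
  -- For each candidate pair (x2, x3), derive a dichotomy
  have main : ∀ x2 ∈ S2, ∀ x3 ∈ S3, x3 ≠ c →
      x2 + x3 + c = a1 ∨ S1.sum id = a2 + a3 + a4 - 2 * c - 2 * x2 - 2 * x3 := by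
    intro x2 hx2 x3 hx3 hx3c
    by_cases hA : x2 + x3 + c = a1
    · left; exact hA
    · right
      have hall : ∀ x ∈ S1, x = a2 - x3 - c ∨ x = a3 - x2 - c ∨ x = a4 - x2 - x3 := by
        intro x hx
        by_contra hxn
        push_neg at hxn
        obtain ⟨n1, n2, n3⟩ := hxn
        have := hcon x hx x2 hx2 x3 hx3 c hc hA
          (by omega) (by omega) (by omega)
        exact hx3c this
      have := sum_three_of_cover S1 h1 _ _ _ hall
      omega
  have D1 := main p hp u hu huc
  have D2 := main p hp v hv hvc
  have D3 := main q hq u hu huc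
  have D4 := main q hq v hv hvc
  rcases D1 with h | h <;> rcases D2 with h' | h' <;> rcases D3 with h'' | h'' <;>
    rcases D4 with h''' | h''' <;> omega
end

section
/- Let S1, S2 be sets of integers with |S1| >= 6 and |S2| >= 2, and let a1, a2, a3, b, c, d be arbitrary integers. Then there exist x1 in S1 and x2 in S2 such that x1+x2 ∉ {a1, a2, a3}, x2 ≠ b, x1 ≠ c, and x1 - x2 ≠ d. -/
theorem stmt_7 (S1 S2 : Finset ℤ) (h1 : 6 ≤ S1.card) (h2 : 2 ≤ S2.card)
    (a1 a2 a3 b c d : ℤ) :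
    ∃ x1 ∈ S1, ∃ x2 ∈ S2,
      x1 + x2 ∉ ({a1, a2, a3} : Set ℤ) ∧ x2 ≠ b ∧ x1 ≠ c ∧ x1 - x2 ≠ d := by
  obtain ⟨x2, hx2⟩ : (S2.erase b).Nonempty := by
    apply Finset.card_pos.mp
    have := Finset.pred_card_le_card_erase (a := b) (s := S2)
    omega
  have hx2S : x2 ∈ S2 := Finset.mem_of_mem_erase hx2
  have hx2b : x2 ≠ b := Finset.ne_of_mem_erase hx2
  set F : Finset ℤ := {a1 - x2, a2 - x2, a3 - x2, c, d + x2} with hF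
  have hFcard : F.card ≤ 5 := by
    apply le_trans (Finset.card_insert_le _ _)
    apply Nat.succ_le_succ
    apply le_trans (Finset.card_insert_le _ _)
    apply Nat.succ_le_succ
    apply le_trans (Finset.card_insert_le _ _)
    apply Nat.succ_le_succ
    exact Finset.card_insert_le _ _
  obtain ⟨x1, hx1⟩ : (S1 \ F).Nonempty := by
    apply Finset.card_pos.mp
    have := Finset.le_card_sdiff F S1
    omega
  rw [Finset.mem_sdiff] at hx1
  obtain ⟨hx1S, hx1F⟩ := hx1
  simp only [hF, Finset.mem_insert, Finset.mem_singleton, not_or] at hx1F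
  refine ⟨x1, hx1S, x2, hx2S, ?_, hx2b, hx1F.2.2.2.1, ?_⟩
  · simp only [Set.mem_insert_iff, Set.mem_singleton_iff, not_or]
    refine ⟨?_, ?_, ?_⟩ <;> omega
  · omega
end

section
/- Every bipartite graph G admits an edge-weighting with weights in {1,2} such that every vertex of degree at least 2 is incident with two edges of different weights. -/
open SimpleGraph

lemma walk_parity {V : Type*} {G : SimpleGraph V} (C : G.Coloring (Fin 2)) :
    ∀ {u v : V} (p : G.Walk u v), (C u = C v ↔ Even p.length) := by
  intro u v p
  induction p with
  | nil => simp
  | @cons u x v h q ih =>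
    have hne : C u ≠ C x := C.valid h
    have h2 : ∀ a b c : Fin 2, a ≠ b → (a = c ↔ ¬ (b = c)) := by
      intro a b c hab
      have := a.isLt; have := b.isLt; have := c.isLt
      simp only [Fin.ext_iff] at *
      omega
    rw [SimpleGraph.Walk.length_cons, Nat.even_add_one, ← ih, h2 _ _ _ hne]

lemma edges_get {V : Type*} {G : SimpleGraph V} :
    ∀ {u v : V} (p : G.Walk u v) (i : ℕ) (h : i < p.length),
      p.edges.get ⟨i, by rw [SimpleGraph.Walk.length_edges]; exact h⟩
        = s(p.getVert i, p.getVert (i + 1)) := by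
  intro u v p
  induction p with
  | nil => intro i h; simp at h
  | @cons u x v hadj q ih =>
    intro i h
    cases i with
    | zero => simp [SimpleGraph.Walk.edges_cons, SimpleGraph.Walk.getVert_zero,
        SimpleGraph.Walk.getVert_cons_succ]
    | succ n =>
      have hn : n < q.length := by simpa [SimpleGraph.Walk.length_cons] using h
      simp only [SimpleGraph.Walk.edges_cons, SimpleGraph.Walk.getVert_cons_succ]
      exact ih n hn

lemma first_edge {V : Type*} {G : SimpleGraph V} {a b c : V} (p : G.Walk a c)
    (hp : p.IsPath) (h : s(a, b) ∈ p.edges) : p.getVert 1 = b := by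
  cases p with
  | nil => simp at h
  | @cons a x c hadj q =>
    rw [SimpleGraph.Walk.edges_cons, List.mem_cons] at h
    rcases h with h | h
    · rw [Sym2.eq_iff] at h
      rcases h with ⟨-, rfl⟩ | ⟨h1, rfl⟩
      · simp [SimpleGraph.Walk.getVert_cons_succ]
      · exact absurd h1 hadj.ne
    · exfalso
      have := SimpleGraph.Walk.fst_mem_support_of_mem_edges q h
      rw [SimpleGraph.Walk.cons_isPath_iff] at hp
      exact hp.2 this

lemma exists_cycle' {V : Type*} [Fintype V] {G : SimpleGraph V}
    (hmin : ∀ w b : V, G.Adj w b → 2 ≤ (G.neighborSet w).ncard)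
    (hne : G.edgeSet.Nonempty) : ∃ (b : V) (c : G.Walk b b), c.IsCycle := by
  classical
  obtain ⟨e, he⟩ := hne
  induction e using Sym2.ind with
  | _ x y =>
  rw [SimpleGraph.mem_edgeSet] at he
  set P : ℕ → Prop := fun k => ∃ (s t : V) (p : G.Walk s t), p.IsPath ∧ p.length = k with hP
  have hP1 : P 1 := by
    refine ⟨x, y, SimpleGraph.Walk.cons he SimpleGraph.Walk.nil, ?_, by simp⟩
    rw [SimpleGraph.Walk.cons_isPath_iff]
    simp [he.ne]
  have hcard : 1 ≤ Fintype.card V := by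
    have : Nonempty V := ⟨x⟩
    exact Fintype.card_pos
  set N := Nat.findGreatest P (Fintype.card V) with hN
  have hPN : P N := Nat.findGreatest_spec hcard hP1
  have hN1 : 1 ≤ N := Nat.le_findGreatest hcard hP1
  obtain ⟨s, t, p, hp, hlen⟩ := hPN
  set q := p.reverse with hqdef
  have hq : q.IsPath := hp.reverse
  have hqlen : q.length = N := by rw [hqdef, SimpleGraph.Walk.length_reverse, hlen]
  have hext : ∀ w, G.Adj w t → w ∈ q.support := by
    intro w hw
    by_contra hns
    have hp' : (SimpleGraph.Walk.cons hw q).IsPath := by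
      rw [SimpleGraph.Walk.cons_isPath_iff]; exact ⟨hq, hns⟩
    have hle : N + 1 ≤ Fintype.card V := by
      have := hp'.length_lt
      simp only [SimpleGraph.Walk.length_cons, hqlen] at this
      omega
    have hPN1 : P (N + 1) := ⟨w, s, _, hp', by simp [hqlen]⟩
    exact Nat.findGreatest_is_greatest (P := P) (by omega) hle hPN1
  have hadj1 : G.Adj t (q.getVert 1) := by
    have h0 : 0 < q.length := by omega
    have := q.adj_getVert_succ h0
    rwa [q.getVert_zero] at this
  have ht2 : 2 ≤ (G.neighborSet t).ncard := hmin t _ hadj1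
  obtain ⟨w1, w2, hw1, hw2, hww⟩ := (Set.one_lt_ncard_iff (Set.toFinite _)).1 ht2
  obtain ⟨w, hwmem, hwne⟩ : ∃ w, w ∈ G.neighborSet t ∧ w ≠ q.getVert 1 := by
    by_cases h1 : w1 = q.getVert 1
    · exact ⟨w2, hw2, fun h => hww (by rw [h1, h])⟩
    · exact ⟨w1, hw1, h1⟩
  have hwadj : G.Adj t w := hwmem
  have hws : w ∈ q.support := hext w hwadj.symm
  set r := q.takeUntil w hws with hr
  have hrpath : r.IsPath := hq.takeUntil hws
  have hedge : s(t, w) ∉ r.reverse.edges := by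
    intro hmem
    rw [SimpleGraph.Walk.edges_reverse, List.mem_reverse] at hmem
    have hfe : r.getVert 1 = w := first_edge r hrpath hmem
    have hrlen : 1 ≤ r.length := by
      by_contra hh
      push_neg at hh
      interval_cases hrl : r.length
      · have : r.edges = [] := by
          have := r.length_edges
          rw [hrl] at this
          exact List.eq_nil_of_length_eq_zero this
        rw [this] at hmem; simp at hmem
    have hq1 : q.getVert 1 = w := by
      conv_lhs => rw [← q.take_spec hws]
      rw [SimpleGraph.Walk.getVert_append]
      by_cases hc : 1 < r.length
      · rw [if_pos hc]; exact hfe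
      · have : r.length = 1 := by omega
        rw [if_neg hc, this]
        simp [SimpleGraph.Walk.getVert_zero]
    exact hwne hq1.symm
  refine ⟨t, SimpleGraph.Walk.cons hwadj r.reverse, ?_⟩
  rw [SimpleGraph.Walk.cons_isCycle_iff]
  exact ⟨hrpath.reverse, hedge⟩

lemma key_lemma {V : Type*} [Fintype V] :
    ∀ (n : ℕ) (G : SimpleGraph V), G.edgeSet.ncard ≤ n → G.Colorable 2 →
      ∃ S : Set (Sym2 V), S ⊆ G.edgeSet ∧
        ∀ v : V, 2 ≤ (G.neighborSet v).ncard →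
          (∃ e ∈ G.incidenceSet v, e ∈ S) ∧ ∃ e ∈ G.incidenceSet v, e ∉ S := by
  classical
  intro n
  induction n with
  | zero =>
    intro G hle _
    refine ⟨∅, by simp, fun v hv => ?_⟩
    exfalso
    obtain ⟨b', hb'⟩ := Set.nonempty_of_ncard_ne_zero
      (show (G.neighborSet v).ncard ≠ 0 by omega)
    have hbe : s(v, b') ∈ G.edgeSet := hb'
    have : G.edgeSet.ncard = 0 := by omega
    rw [Set.ncard_eq_zero (Set.toFinite _)] at this
    rw [this] at hbe
    exact hbe
  | succ n IH =>
    intro G hle hcol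
    by_cases hne : G.edgeSet.Nonempty
    swap
    · refine ⟨∅, by simp, fun v hv => ?_⟩
      exfalso
      obtain ⟨b', hb'⟩ := Set.nonempty_of_ncard_ne_zero
        (show (G.neighborSet v).ncard ≠ 0 by omega)
      exact hne ⟨s(v, b'), hb'⟩
    by_cases hdeg1 : ∃ v, (G.neighborSet v).ncard = 1
    · -- Case 2: a vertex of degree 1 exists
      obtain ⟨v, hv1⟩ := hdeg1
      obtain ⟨u, hu⟩ := Set.ncard_eq_one.mp hv1
      have hadj : G.Adj v u := by
        have : u ∈ G.neighborSet v := by rw [hu]; exact Set.mem_singleton u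
        exact this
      have hvu : v ≠ u := hadj.ne
      set e0 : Sym2 V := s(v, u) with he0def
      set G' := G.deleteEdges {e0} with hG'
      have hE' : G'.edgeSet = G.edgeSet \ {e0} := SimpleGraph.edgeSet_deleteEdges _
      have he0 : e0 ∈ G.edgeSet := hadj
      have hlt : G'.edgeSet.ncard ≤ n := by
        have h1 := Set.ncard_diff_singleton_lt_of_mem he0 (Set.toFinite _)
        rw [← hE'] at h1
        omega
      have hcol' : G'.Colorable 2 :=
        SimpleGraph.Colorable.mono_left (G.deleteEdges_le {e0}) hcol
      obtain ⟨S', hS'sub, hS'⟩ := IH G' hlt hcol'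
      have hnotin : ∀ e ∈ G'.edgeSet, e ≠ e0 := by
        intro e he' h
        rw [hE'] at he'
        exact he'.2 (h ▸ rfl)
      have hNS : ∀ w, w ≠ v → w ≠ u → G'.neighborSet w = G.neighborSet w := by
        intro w hwv hwu
        ext b
        simp only [SimpleGraph.mem_neighborSet, hG', SimpleGraph.deleteEdges_adj,
          Set.mem_singleton_iff, he0def]
        constructor
        · exact fun h => h.1
        · intro h
          refine ⟨h, fun hc => ?_⟩
          rw [Sym2.eq_iff] at hc
          rcases hc with ⟨h1, -⟩ | ⟨h1, -⟩
          exacts [hwv h1, hwu h1]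
      have hIncSub : ∀ w, G'.incidenceSet w ⊆ G.incidenceSet w := by
        intro w e he
        refine ⟨?_, he.2⟩
        have := he.1
        rw [hE'] at this
        exact this.1
      have hNu : G'.neighborSet u = G.neighborSet u \ {v} := by
        ext b
        simp only [SimpleGraph.mem_neighborSet, SimpleGraph.deleteEdges_adj, Set.mem_diff,
          Set.mem_singleton_iff, hG', he0def]
        constructor
        · rintro ⟨h1, h2⟩
          refine ⟨h1, fun hb => h2 ?_⟩
          rw [hb, Sym2.eq_iff]
          right; exact ⟨rfl, rfl⟩
        · rintro ⟨h1, h2⟩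
          refine ⟨h1, fun hc => ?_⟩
          rw [Sym2.eq_iff] at hc
          rcases hc with ⟨h3, -⟩ | ⟨-, h4⟩
          · exact hvu h3.symm
          · exact h2 h4
      have hNu' : (G'.neighborSet u).ncard = (G.neighborSet u).ncard - 1 := by
        rw [hNu]
        exact Set.ncard_diff_singleton_of_mem hadj.symm
      have generic : ∀ (S : Set (Sym2 V)), S' ⊆ S → (∀ e ∈ G'.edgeSet, e ∈ S → e ∈ S') →
          ∀ w, 2 ≤ (G'.neighborSet w).ncard →
          (∃ e ∈ G.incidenceSet w, e ∈ S) ∧ ∃ e ∈ G.incidenceSet w, e ∉ S := by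
        intro S hsub hback w hw
        obtain ⟨⟨e1, he1, he1S⟩, ⟨e2, he2, he2S⟩⟩ := hS' w hw
        exact ⟨⟨e1, hIncSub w he1, hsub he1S⟩,
               ⟨e2, hIncSub w he2, fun hc => he2S (hback e2 (G'.incidenceSet_subset w he2) hc)⟩⟩
      have haffect : ∀ w, 2 ≤ (G.neighborSet w).ncard →
          ¬ (2 ≤ (G'.neighborSet w).ncard) → w = u := by
        intro w hw hw'
        by_cases h1 : w = u
        · exact h1
        exfalso
        by_cases h2 : w = v
        · rw [h2, hv1] at hw; omega
        · rw [hNS w h2 h1] at hw'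
          exact hw' hw
      have hSsub' : S' ⊆ G.edgeSet := hS'sub.trans (by rw [hE']; exact Set.diff_subset)
      have hue0 : e0 ∈ G.incidenceSet u := ⟨he0, by rw [he0def]; simp⟩
      by_cases hbig : 2 ≤ (G'.neighborSet u).ncard
      · refine ⟨S' ∪ {e0}, Set.union_subset hSsub' (by simpa using he0), fun w hw => ?_⟩
        by_cases hw' : 2 ≤ (G'.neighborSet w).ncard
        · refine generic _ Set.subset_union_left ?_ w hw'
          intro e he hc
          rcases hc with hc | hc
          · exact hc
          · exact absurd (by simpa using hc) (hnotin e he)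
        · have hwu := haffect w hw hw'
          rw [hwu] at hw'
          exact absurd hbig hw'
      · by_cases hexS : ∃ e ∈ G'.incidenceSet u, e ∈ S'
        · refine ⟨S', hSsub', fun w hw => ?_⟩
          by_cases hw' : 2 ≤ (G'.neighborSet w).ncard
          · exact generic S' le_rfl (fun _ _ h => h) w hw'
          · have hwu := haffect w hw hw'
            subst hwu
            obtain ⟨e, heI, heS⟩ := hexS
            refine ⟨⟨e, hIncSub _ heI, heS⟩, ⟨e0, hue0, fun hc => ?_⟩⟩
            exact hnotin e0 (hS'sub hc) rfl
        · push_neg at hexS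
          refine ⟨S' ∪ {e0}, Set.union_subset hSsub' (by simpa using he0), fun w hw => ?_⟩
          by_cases hw' : 2 ≤ (G'.neighborSet w).ncard
          · refine generic _ Set.subset_union_left ?_ w hw'
            intro e he hc
            rcases hc with hc | hc
            · exact hc
            · exact absurd (by simpa using hc) (hnotin e he)
          · have hwu := haffect w hw hw'
            subst hwu
            have h1 : 1 ≤ (G'.neighborSet w).ncard := by rw [hNu']; omega
            obtain ⟨b, hb⟩ := Set.nonempty_of_ncard_ne_zero
              (show (G'.neighborSet w).ncard ≠ 0 by omega)
            have he1 : s(w, b) ∈ G'.incidenceSet w := (G'.mem_incidenceSet w b).2 hb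
            refine ⟨⟨e0, hue0, Or.inr rfl⟩, ⟨s(w, b), hIncSub _ he1, ?_⟩⟩
            rintro (h | h)
            · exact hexS _ he1 h
            · exact hnotin _ (G'.incidenceSet_subset w he1) (by simpa using h)
    · -- Case 3: minimum degree ≥ 2 on the support; find a cycle
      push_neg at hdeg1
      have hmin : ∀ w b : V, G.Adj w b → 2 ≤ (G.neighborSet w).ncard := by
        intro w b h
        have h1 : (G.neighborSet w).ncard ≠ 0 := by
          intro h0
          rw [Set.ncard_eq_zero (Set.toFinite _)] at h0
          rw [Set.eq_empty_iff_forall_notMem] at h0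
          exact h0 b h
        have h2 := hdeg1 w
        omega
      obtain ⟨b, c, hcyc⟩ := exists_cycle' hmin hne
      have hcolsave := hcol
      obtain ⟨C⟩ := hcol
      have heven : Even c.length := (walk_parity C c).1 rfl
      have hlen3 : 3 ≤ c.length := hcyc.three_le_length
      have hnodup : c.edges.Nodup := hcyc.edges_nodup
      have hElen : c.edges.length = c.length := c.length_edges
      set Ec : Set (Sym2 V) := {e | e ∈ c.edges} with hEc
      set Sc : Set (Sym2 V) :=
        {e | ∃ i : Fin c.edges.length, Even i.val ∧ c.edges.get i = e} with hSc
      set G' := G.deleteEdges Ec with hG'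
      have hE' : G'.edgeSet = G.edgeSet \ Ec := SimpleGraph.edgeSet_deleteEdges _
      have hc0 : 0 < c.edges.length := by omega
      have hestar : c.edges.get ⟨0, hc0⟩ ∈ G.edgeSet :=
        c.edges_subset_edgeSet (List.get_mem _ _)
      have hcle : G'.edgeSet.ncard ≤ n := by
        have hss : G'.edgeSet ⊂ G.edgeSet := by
          rw [hE']
          refine Set.ssubset_iff_subset_ne.2 ⟨Set.diff_subset, fun h => ?_⟩
          have := hestar
          rw [← h] at this
          exact this.2 (List.get_mem _ _)
        have := Set.ncard_lt_ncard hss (Set.toFinite _)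
        omega
      have hcol' : G'.Colorable 2 :=
        SimpleGraph.Colorable.mono_left (G.deleteEdges_le Ec) hcolsave
      obtain ⟨S', hS'sub, hS'⟩ := IH G' hcle hcol'
      have hpair : ∀ w ∈ c.support, ∃ i j : Fin c.edges.length,
          Even i.val ∧ ¬ Even j.val ∧ w ∈ c.edges.get i ∧ w ∈ c.edges.get j := by
        intro w hw
        obtain ⟨m, hgv, hm⟩ := SimpleGraph.Walk.mem_support_iff_exists_getVert.1 hw
        by_cases hmid : 0 < m ∧ m < c.length
        · obtain ⟨hm0, hmL⟩ := hmid
          have hi1 : m - 1 < c.edges.length := by omega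
          have hi2 : m < c.edges.length := by omega
          have hg1 : c.edges.get ⟨m - 1, hi1⟩ = s(c.getVert (m - 1), c.getVert m) := by
            have h := edges_get c (m - 1) (by omega)
            have h2 : m - 1 + 1 = m := by omega
            rw [h2] at h
            exact h
          have hg2 : c.edges.get ⟨m, hi2⟩ = s(c.getVert m, c.getVert (m + 1)) :=
            edges_get c m (by omega)
          have hw1 : w ∈ c.edges.get ⟨m - 1, hi1⟩ := by
            rw [hg1, Sym2.mem_iff]
            right; exact hgv.symm
          have hw2 : w ∈ c.edges.get ⟨m, hi2⟩ := by
            rw [hg2, Sym2.mem_iff]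
            left; exact hgv.symm
          by_cases hev : Even m
          · refine ⟨⟨m, hi2⟩, ⟨m - 1, hi1⟩, hev, ?_, hw2, hw1⟩
            show ¬ Even (m - 1)
            rw [Nat.even_iff] at hev ⊢
            omega
          · refine ⟨⟨m - 1, hi1⟩, ⟨m, hi2⟩, ?_, hev, hw1, hw2⟩
            show Even (m - 1)
            rw [Nat.even_iff] at hev ⊢
            omega
        · have hwb : w = b := by
            rcases (by omega : m = 0 ∨ m = c.length) with h | h
            · rw [h, c.getVert_zero] at hgv; exact hgv.symm
            · rw [h, c.getVert_length] at hgv; exact hgv.symm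
          have hi1 : 0 < c.edges.length := hc0
          have hi2 : c.length - 1 < c.edges.length := by omega
          have hg1 : c.edges.get ⟨0, hi1⟩ = s(c.getVert 0, c.getVert 1) :=
            edges_get c 0 (by omega)
          have hg2 : c.edges.get ⟨c.length - 1, hi2⟩
              = s(c.getVert (c.length - 1), c.getVert c.length) := by
            have h := edges_get c (c.length - 1) (by omega)
            have h2 : c.length - 1 + 1 = c.length := by omega
            rw [h2] at h
            exact h
          have hw1 : w ∈ c.edges.get ⟨0, hi1⟩ := by
            rw [hg1, Sym2.mem_iff]
            left; rw [hwb, c.getVert_zero]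
          have hw2 : w ∈ c.edges.get ⟨c.length - 1, hi2⟩ := by
            rw [hg2, Sym2.mem_iff]
            right; rw [hwb, c.getVert_length]
          refine ⟨⟨0, hi1⟩, ⟨c.length - 1, hi2⟩, Even.zero, ?_, hw1, hw2⟩
          show ¬ Even (c.length - 1)
          rw [Nat.even_iff] at heven ⊢
          omega
      refine ⟨Sc ∪ S', ?_, fun w hw => ?_⟩
      · refine Set.union_subset ?_ (hS'sub.trans (by rw [hE']; exact Set.diff_subset))
        rintro e ⟨i, -, rfl⟩
        exact c.edges_subset_edgeSet (List.get_mem _ _)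
      · by_cases hws : w ∈ c.support
        · obtain ⟨i, j, hie, hjo, hwi, hwj⟩ := hpair w hws
          refine ⟨⟨c.edges.get i, ⟨c.edges_subset_edgeSet (List.get_mem _ _), hwi⟩,
            Or.inl ⟨i, hie, rfl⟩⟩,
            ⟨c.edges.get j, ⟨c.edges_subset_edgeSet (List.get_mem _ _), hwj⟩, ?_⟩⟩
          rintro (⟨i', hi'e, hg⟩ | hg)
          · have hij : i' = j := (List.Nodup.get_inj_iff hnodup).1 hg
            rw [hij] at hi'e
            exact hjo hi'e
          · have h := hS'sub hg
            rw [hE'] at h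
            exact h.2 (List.get_mem _ _)
        · have hnb : G'.neighborSet w = G.neighborSet w := by
            ext b'
            simp only [SimpleGraph.mem_neighborSet, hG', SimpleGraph.deleteEdges_adj, hEc,
              Set.mem_setOf_eq]
            constructor
            · exact fun h => h.1
            · intro h
              exact ⟨h, fun hc => hws (c.fst_mem_support_of_mem_edges hc)⟩
          rw [← hnb] at hw
          obtain ⟨⟨e1, he1, he1S⟩, ⟨e2, he2, he2S⟩⟩ := hS' w hw
          have hIncSub : G'.incidenceSet w ⊆ G.incidenceSet w := by
            intro e he
            refine ⟨?_, he.2⟩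
            have h := he.1
            rw [hE'] at h
            exact h.1
          refine ⟨⟨e1, hIncSub he1, Or.inr he1S⟩, ⟨e2, hIncSub he2, ?_⟩⟩
          rintro (⟨i', -, hg⟩ | hg)
          · have h := G'.incidenceSet_subset w he2
            rw [hE'] at h
            exact h.2 (hg ▸ List.get_mem _ _)
          · exact he2S hg

theorem stmt_10 {V : Type*} [Fintype V] (G : SimpleGraph V) [DecidableRel G.Adj]
    (hbip : G.Colorable 2) :
    ∃ ω : Sym2 V → ℕ,
      (∀ e ∈ G.edgeSet, ω e ∈ ({1, 2} : Set ℕ)) ∧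
      (∀ v : V, 2 ≤ G.degree v →
        ∃ e1 ∈ G.incidenceSet v, ∃ e2 ∈ G.incidenceSet v, ω e1 ≠ ω e2) := by
  classical
  obtain ⟨S, -, hS⟩ := key_lemma G.edgeSet.ncard G le_rfl hbip
  refine ⟨fun e => if e ∈ S then 1 else 2, fun e _ => ?_, fun v hv => ?_⟩
  · by_cases h : e ∈ S <;> simp [h]
  · have hdeg : 2 ≤ (G.neighborSet v).ncard := by
      rwa [Set.ncard_eq_toFinset_card', ← SimpleGraph.neighborFinset_def]
    obtain ⟨⟨e1, he1, he1S⟩, ⟨e2, he2, he2S⟩⟩ := hS v hdeg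
    refine ⟨e1, he1, e2, he2, ?_⟩
    simp [he1S, he2S]
end

section
/- Let G be a connected bipartite graph on at least three vertices with vertex bipartition (V1, V2). Then G admits an edge-weighting ω with weights in {1,2,3} such that the induced vertex-colouring σ_ω(v) = sum of ω over edges incident with v satisfies σ_ω(u) ≢ σ_ω(w) (mod 3) whenever u ∈ V1 and w ∈ V2. -/
open Finset

private lemma aux_ind_sum {V : Type*} [Fintype V] [DecidableEq V] (G : SimpleGraph V)
    [DecidableRel G.Adj] {u b : V} (h : G.Adj u b) (v : V) :
    (∑ z ∈ G.neighborFinset v, if s(v, z) = s(u, b) then (1 : ZMod 3) else 0) =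
      (if v = u then 1 else 0) + (if v = b then 1 else 0) := by
  have hub : u ≠ b := h.ne
  by_cases hvu : v = u
  · subst hvu
    simp [Sym2.eq_iff, hub, SimpleGraph.mem_neighborFinset, h]
  · by_cases hvb : v = b
    · subst hvb
      simp [Sym2.eq_iff, hvu, Ne.symm hvu, hub, SimpleGraph.mem_neighborFinset, h.symm]
    · simp [Sym2.eq_iff, hvu, hvb]

private lemma aux_walk {V : Type*} [Fintype V] [DecidableEq V] (G : SimpleGraph V)
    [DecidableRel G.Adj] {u w : V} (p : G.Walk u w) :
    ∃ x : Sym2 V → ZMod 3, ∀ v : V,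
      (∑ z ∈ G.neighborFinset v, x s(v, z)) =
        (if v = u then 1 else 0) + (if v = w then (-1) ^ (p.length + 1) else 0) := by
  induction p with
  | @nil a =>
      refine ⟨fun _ => 0, fun v => ?_⟩
      simp only [Finset.sum_const_zero, SimpleGraph.Walk.length_nil, pow_one, zero_add]
      by_cases h : v = a
      · rw [if_pos h, if_pos h]; decide
      · rw [if_neg h, if_neg h]; simp
  | @cons a c w h q ih =>
      obtain ⟨x, hx⟩ := ih
      refine ⟨fun e => -x e + (if e = s(a, c) then 1 else 0), fun v => ?_⟩
      have hsum : (∑ z ∈ G.neighborFinset v,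
            (-x s(v, z) + (if s(v, z) = s(a, c) then (1 : ZMod 3) else 0)))
          = -(∑ z ∈ G.neighborFinset v, x s(v, z))
            + ∑ z ∈ G.neighborFinset v, (if s(v, z) = s(a, c) then (1 : ZMod 3) else 0) := by
        rw [Finset.sum_add_distrib]
        congr 1
        exact Finset.sum_neg_distrib _
      rw [hsum, hx v, aux_ind_sum G h v]
      simp only [SimpleGraph.Walk.length_cons, pow_succ]
      split_ifs <;> ring

private lemma aux_parity {V : Type*} (G : SimpleGraph V) (V1 V2 : Set V)
    (hpart : ∀ v : V, (v ∈ V1 ∧ v ∉ V2) ∨ (v ∈ V2 ∧ v ∉ V1))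
    (hbip : ∀ u v : V, G.Adj u v → (u ∈ V1 ∧ v ∈ V2) ∨ (u ∈ V2 ∧ v ∈ V1))
    (ε : V → ZMod 3) (hε1 : ∀ v ∈ V1, ε v = 1) (hε2 : ∀ v, v ∉ V1 → ε v = -1)
    {u w : V} (p : G.Walk u w) :
    ((-1 : ZMod 3) ^ p.length) = ε u * ε w := by
  have hsq : ∀ v : V, ε v * ε v = 1 := by
    intro v
    by_cases h : v ∈ V1
    · rw [hε1 v h]; ring
    · rw [hε2 v h]; ring
  induction p with
  | @nil a => simpa using (hsq a).symm
  | @cons a c w h q ih =>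
      have hac : ε a = -(ε c) := by
        rcases hbip a c h with ⟨h1, h2⟩ | ⟨h1, h2⟩
        · have hc : c ∉ V1 := by
            rcases hpart c with ⟨_, hc2⟩ | ⟨_, hc1⟩
            · exact absurd h2 hc2
            · exact hc1
          rw [hε1 a h1, hε2 c hc]; ring
        · have ha : a ∉ V1 := by
            rcases hpart a with ⟨_, ha2⟩ | ⟨_, ha1⟩
            · exact absurd h1 ha2
            · exact ha1
          rw [hε2 a ha, hε1 c h2]
      simp only [SimpleGraph.Walk.length_cons, pow_succ]
      rw [ih, hac]; ring

private lemma aux_t {V : Type*} [Fintype V] [DecidableEq V] (S : Finset V)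
    (hS : S.card ≠ 1) :
    ∃ t : V → ZMod 3, (∀ v ∉ S, t v = 0) ∧ (∀ v ∈ S, t v ≠ 0) ∧ (∑ v ∈ S, t v) = 0 := by
  set m := (3 - S.card % 3) % 3 with hm
  have hmle : m ≤ S.card := by omega
  obtain ⟨M, hMS, hMcard⟩ := Finset.exists_subset_card_eq hmle
  refine ⟨fun v => if v ∈ M then 2 else if v ∈ S then 1 else 0, ?_, ?_, ?_⟩
  · intro v hv
    have hvM : v ∉ M := fun h => hv (hMS h)
    simp [hvM, hv]
  · intro v hv
    by_cases h : v ∈ M <;> simp [h, hv] <;> decide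
  · rw [← Finset.sum_sdiff hMS]
    have h1 : (∑ v ∈ S \ M, (if v ∈ M then (2 : ZMod 3) else if v ∈ S then 1 else 0))
        = ((S.card - M.card : ℕ) : ZMod 3) := by
      rw [Finset.sum_congr rfl (fun v hv => by
        rw [if_neg (Finset.mem_sdiff.mp hv).2, if_pos (Finset.mem_sdiff.mp hv).1])]
      rw [Finset.sum_const, Finset.card_sdiff_of_subset hMS, nsmul_eq_mul, mul_one]
    have h2 : (∑ v ∈ M, (if v ∈ M then (2 : ZMod 3) else if v ∈ S then 1 else 0))
        = ((M.card : ℕ) : ZMod 3) * 2 := by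
      rw [Finset.sum_congr rfl (fun v hv => by rw [if_pos hv])]
      rw [Finset.sum_const, nsmul_eq_mul]
    rw [h1, h2]
    have hdvd : (3 : ℕ) ∣ (S.card - M.card) + M.card * 2 := by omega
    have hz : (((S.card - M.card) + M.card * 2 : ℕ) : ZMod 3) = 0 :=
      (ZMod.natCast_eq_zero_iff _ 3).mpr hdvd
    push_cast at hz ⊢
    linear_combination hz

theorem stmt_11 {V : Type*} [Fintype V] [DecidableEq V] (G : SimpleGraph V)
    [DecidableRel G.Adj] (V1 V2 : Set V)
    (hpart : ∀ v : V, (v ∈ V1 ∧ v ∉ V2) ∨ (v ∈ V2 ∧ v ∉ V1))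
    (hbip : ∀ u v : V, G.Adj u v → (u ∈ V1 ∧ v ∈ V2) ∨ (u ∈ V2 ∧ v ∈ V1))
    (hconn : G.Connected) (hn : 3 ≤ Fintype.card V) :
    ∃ ω : Sym2 V → ℕ,
      (∀ e ∈ G.edgeSet, ω e ∈ ({1, 2, 3} : Set ℕ)) ∧
      (∀ u ∈ V1, ∀ w ∈ V2,
        ((∑ x ∈ G.neighborFinset u, ω s(u, x) : ℕ) : ZMod 3) ≠
        ((∑ x ∈ G.neighborFinset w, ω s(w, x) : ℕ) : ZMod 3)) := by
  classical
  -- the sign function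
  set ε : V → ZMod 3 := fun v => if v ∈ V1 then (1 : ZMod 3) else -1 with hεdef
  have hε1 : ∀ v ∈ V1, ε v = 1 := fun v hv => by simp [hεdef, hv]
  have hε2 : ∀ v, v ∉ V1 → ε v = -1 := fun v hv => by simp [hεdef, hv]
  -- basepoint
  have hnV : Nonempty V := Fintype.card_pos_iff.mp (by omega)
  obtain ⟨v0⟩ := hnV
  -- elementary correctors
  have hX : ∀ v : V, ∃ x : Sym2 V → ZMod 3, ∀ z : V,
      (∑ y ∈ G.neighborFinset z, x s(z, y)) =
        (if z = v then 1 else 0) + (if z = v0 then -(ε v * ε v0) else 0) := by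
    intro v
    obtain ⟨p⟩ := hconn.preconnected v v0
    obtain ⟨x, hx⟩ := aux_walk G p
    refine ⟨x, fun z => ?_⟩
    rw [hx z]
    have hpar := aux_parity G V1 V2 hpart hbip ε hε1 hε2 p
    congr 1
    by_cases hz : z = v0
    · rw [if_pos hz, if_pos hz, pow_succ, hpar]; ring
    · rw [if_neg hz, if_neg hz]
  choose X hXp using hX
  -- the two sides as finsets
  set A : Finset V := Finset.univ.filter (· ∈ V1) with hAdef
  set B : Finset V := Finset.univ.filter (· ∈ V2) with hBdef
  have hmemA : ∀ v : V, v ∈ A ↔ v ∈ V1 := fun v => by simp [hAdef]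
  have hmemB : ∀ v : V, v ∈ B ↔ v ∈ V2 := fun v => by simp [hBdef]
  have hcardAB : A.card + B.card = Fintype.card V := by
    have : B = Finset.univ.filter (fun v => ¬ v ∈ V1) := by
      apply Finset.filter_congr
      intro v _
      rcases hpart v with ⟨h1, h2⟩ | ⟨h1, h2⟩ <;> simp [h1, h2]
    rw [this]
    exact Finset.card_filter_add_card_filter_not _
  -- the target colouring
  obtain ⟨t, hts, htd⟩ : ∃ t : V → ZMod 3,
      (∑ v : V, t v * ε v) = 0 ∧ (∀ u ∈ V1, ∀ w ∈ V2, t u ≠ t w) := by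
    by_cases hB1 : B.card = 1
    · -- use side A
      have hA1 : A.card ≠ 1 := by omega
      obtain ⟨t, ht0, htne, hsum⟩ := aux_t A hA1
      refine ⟨t, ?_, ?_⟩
      · have : (∑ v : V, t v * ε v) = ∑ v ∈ A, t v * ε v := by
          rw [Finset.sum_subset (Finset.subset_univ A)]
          intro v _ hv
          rw [ht0 v hv, zero_mul]
        rw [this]
        calc ∑ v ∈ A, t v * ε v = ∑ v ∈ A, t v := by
              refine Finset.sum_congr rfl fun v hv => ?_
              rw [hε1 v ((hmemA v).mp hv), mul_one]
          _ = 0 := hsum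
      · intro u hu w hw
        have hwA : w ∉ A := by
          rw [hmemA]
          rcases hpart w with ⟨_, h2⟩ | ⟨_, h1⟩
          · exact absurd hw h2
          · exact h1
        rw [ht0 w hwA]
        exact htne u ((hmemA u).mpr hu)
    · -- use side B
      obtain ⟨t, ht0, htne, hsum⟩ := aux_t B hB1
      refine ⟨t, ?_, ?_⟩
      · have : (∑ v : V, t v * ε v) = ∑ v ∈ B, t v * ε v := by
          rw [Finset.sum_subset (Finset.subset_univ B)]
          intro v _ hv
          rw [ht0 v hv, zero_mul]
        rw [this]
        have hBneg : ∀ v ∈ B, ε v = -1 := by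
          intro v hv
          apply hε2
          rcases hpart v with ⟨_, h2⟩ | ⟨_, h1⟩
          · exact absurd ((hmemB v).mp hv) h2
          · exact h1
        calc ∑ v ∈ B, t v * ε v = ∑ v ∈ B, -(t v) := by
              refine Finset.sum_congr rfl fun v hv => ?_
              rw [hBneg v hv]; ring
          _ = -(∑ v ∈ B, t v) := by rw [Finset.sum_neg_distrib]
          _ = 0 := by rw [hsum, neg_zero]
      · intro u hu w hw
        have huB : u ∉ B := by
          rw [hmemB]
          rcases hpart u with ⟨_, h2⟩ | ⟨_, h1⟩
          · exact h2
          · exact absurd hu h1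
        rw [ht0 u huB]
        exact fun hcontra => htne w ((hmemB w).mpr hw) hcontra.symm
  -- the global weighting over ZMod 3
  set ξ : Sym2 V → ZMod 3 := fun e => ∑ v : V, t v * X v e with hξdef
  have hFξ : ∀ z : V, (∑ y ∈ G.neighborFinset z, ξ s(z, y)) = t z := by
    intro z
    have step1 : (∑ y ∈ G.neighborFinset z, ξ s(z, y))
        = ∑ v : V, t v * (∑ y ∈ G.neighborFinset z, X v s(z, y)) := by
      simp only [hξdef]
      rw [Finset.sum_comm]
      exact Finset.sum_congr rfl fun v _ => (Finset.mul_sum _ _ _).symm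
    rw [step1]
    have step2 : (∑ v : V, t v * (∑ y ∈ G.neighborFinset z, X v s(z, y)))
        = ∑ v : V, (t v * (if z = v then 1 else 0)
            + t v * (if z = v0 then -(ε v * ε v0) else 0)) := by
      refine Finset.sum_congr rfl fun v _ => ?_
      rw [hXp v z, mul_add]
    rw [step2, Finset.sum_add_distrib]
    have hfirst : (∑ v : V, t v * (if z = v then 1 else 0)) = t z := by
      rw [Finset.sum_congr rfl (fun v _ => by
        rw [mul_ite, mul_one, mul_zero])]
      rw [Finset.sum_ite_eq]
      simp
    have hsecond : (∑ v : V, t v * (if z = v0 then -(ε v * ε v0) else 0)) = 0 := by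
      by_cases hz : z = v0
      · subst hz
        calc (∑ v : V, t v * (if z = z then -(ε v * ε z) else 0))
            = ∑ v : V, (t v * ε v) * (-(ε z)) := by
              refine Finset.sum_congr rfl fun v _ => ?_
              rw [if_pos rfl]; ring
          _ = (∑ v : V, t v * ε v) * (-(ε z)) := by rw [Finset.sum_mul]
          _ = 0 := by rw [hts, zero_mul]
      · calc (∑ v : V, t v * (if z = v0 then -(ε v * ε v0) else 0))
            = ∑ v : V, (0 : ZMod 3) := by
              refine Finset.sum_congr rfl fun v _ => ?_
              rw [if_neg hz, mul_zero]
          _ = 0 := Finset.sum_const_zero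
    rw [hfirst, hsecond, add_zero]
  -- the natural-number weighting
  refine ⟨fun e => if e ∈ G.edgeSet then (if ξ e = 0 then 3 else (ξ e).val) else 1, ?_, ?_⟩
  · intro e he
    dsimp only
    rw [if_pos he]
    by_cases h0 : ξ e = 0
    · rw [if_pos h0]; simp
    · rw [if_neg h0]
      have hlt : (ξ e).val < 3 := ZMod.val_lt (ξ e)
      have hne0 : (ξ e).val ≠ 0 := fun h => h0 (by
        have := (ZMod.val_eq_zero (ξ e)).mp h
        exact this)
      interval_cases h : (ξ e).val <;> simp_all
  · intro u hu w hw
    have hcast : ∀ z : V,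
        ((∑ y ∈ G.neighborFinset z,
          (if s(z, y) ∈ G.edgeSet then (if ξ s(z, y) = 0 then 3 else (ξ s(z, y)).val) else 1) : ℕ)
            : ZMod 3) = t z := by
      intro z
      rw [Nat.cast_sum, ← hFξ z]
      refine Finset.sum_congr rfl fun y hy => ?_
      have hadj : G.Adj z y := (G.mem_neighborFinset z y).mp hy
      have hedge : s(z, y) ∈ G.edgeSet := G.mem_edgeSet.mpr hadj
      rw [if_pos hedge]
      by_cases h0 : ξ s(z, y) = 0
      · rw [if_pos h0, h0]
        decide
      · rw [if_neg h0]
        simp [ZMod.natCast_val, ZMod.cast_id]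
    rw [hcast u, hcast w]
    exact htd u hu w hw
end

section
/- Let G be a connected bipartite graph on at least three vertices with vertex bipartition (V1, V2) where |V1| is even, and suppose G admits an edge-weighting ω with weights in {1,2} such that σ_ω(u) ≢ σ_ω(w) (mod 2) whenever u ∈ V1 and w ∈ V2. Then G admits an edge-weighting with weights in {1,...,4} that is neighbour sum distinguishing and in which every vertex of degree at least 2 is incident with two edges of different weights. -/
namespace Stmt16Aux
open SimpleGraph

variable {V : Type*}


lemma exists_dart_fst {G : SimpleGraph V} {u v : V} (p : G.Walk u v) (x : V) :
    x ∈ p.support → x ≠ v → ∃ d ∈ p.darts, d.fst = x := by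
  induction p with
  | nil => intro hx hxv; simp at hx; exact absurd hx hxv
  | cons h q ih =>
    intro hx hxv
    rw [Walk.support_cons] at hx
    rcases List.mem_cons.mp hx with rfl | hx'
    · exact ⟨⟨(_, _), h⟩, by simp [Walk.darts_cons], rfl⟩
    · obtain ⟨d, hd, hdx⟩ := ih hx' hxv
      exact ⟨d, by simp [Walk.darts_cons, hd], hdx⟩

lemma exists_dart_snd {G : SimpleGraph V} {u v : V} (p : G.Walk u v) (x : V) :
    x ∈ p.support → x ≠ u → ∃ d ∈ p.darts, d.snd = x := by
  induction p with
  | nil => intro hx hxv; simp at hx; exact absurd hx hxv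
  | @cons a b c h q ih =>
    intro hx hxu
    rw [Walk.support_cons] at hx
    rcases List.mem_cons.mp hx with rfl | hx'
    · exact absurd rfl hxu
    · by_cases hxb : x = b
      · exact ⟨⟨(a, b), h⟩, by simp [Walk.darts_cons], hxb.symm⟩
      · obtain ⟨d, hd, hdx⟩ := ih hx' hxb
        exact ⟨d, by simp [Walk.darts_cons, hd], hdx⟩

lemma closed_darts {G : SimpleGraph V} {a : V} (c : G.Walk a a)
    (hnil : c.darts ≠ []) {x : V} (hx : x ∈ c.support) :
    (∃ d ∈ c.darts, d.snd = x) ∧ (∃ d ∈ c.darts, d.fst = x) := by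
  constructor
  · by_cases hxa : x = a
    · exact ⟨c.darts.getLast hnil, List.getLast_mem hnil,
        by rw [Walk.getLast_darts_eq_lastDart, Walk.lastDart_toProd, hxa]⟩
    · exact exists_dart_snd c x hx hxa
  · by_cases hxa : x = a
    · exact ⟨c.darts.head hnil, List.head_mem hnil,
        by rw [Walk.head_darts_eq_firstDart, Walk.firstDart_toProd, hxa]⟩
    · exact exists_dart_fst c x hx hxa

lemma dart_unique {G : SimpleGraph V} {u v : V} {c : G.Walk u v} (hn : c.edges.Nodup)
    {d d' : G.Dart} (hd : d ∈ c.darts) (hd' : d' ∈ c.darts) (he : d.edge = d'.edge) :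
    d = d' :=
  List.inj_on_of_nodup_map hn hd hd' he

/-- the alternating-by-bipartition coloring of the edges of a closed walk -/
def cycf [DecidableEq V] (χ : V → Bool) {G : SimpleGraph V} {a : V} (c : G.Walk a a) :
    Sym2 V → Bool :=
  fun e => c.darts.any fun d => decide (d.edge = e) && χ d.snd

lemma cycf_eq [DecidableEq V] (χ : V → Bool) {G : SimpleGraph V} {a : V} {c : G.Walk a a}
    (hn : c.edges.Nodup) {d : G.Dart} (hd : d ∈ c.darts) :
    cycf χ c d.edge = χ d.snd := by
  unfold cycf
  cases hcs : χ d.snd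
  · rw [List.any_eq_false]
    intro d' hd'
    simp only [Bool.and_eq_true, decide_eq_true_eq, not_and]
    intro he
    have := dart_unique hn hd' hd he
    subst this
    simp [hcs]
  · rw [List.any_eq_true]
    exact ⟨d, hd, by simp [hcs]⟩



lemma exists_cycle_aux [Fintype V] [DecidableEq V] (G : SimpleGraph V) [DecidableRel G.Adj]
    (hdeg : ∀ x, G.degree x ≠ 1) :
    ∀ (n : ℕ) {u v : V} (p : G.Walk v u), p.IsPath → ¬ p.Nil →
      Fintype.card V ≤ p.length + n →
      ∃ (a : V) (c : G.Walk a a), c.IsCycle := by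
  intro n
  induction n with
  | zero =>
    intro u v p hp _ hlen
    have := hp.length_lt
    omega
  | succ n ih =>
    intro u v p hp hnil hlen
    cases p with
    | nil => simp at hnil
    | @cons v b u h q =>
      have hbmem : b ∈ G.neighborFinset v := by
        rw [SimpleGraph.mem_neighborFinset]; exact h
      have hvdeg : 2 ≤ G.degree v := by
        have h1 : 0 < G.degree v := Finset.card_pos.mpr ⟨b, hbmem⟩
        have := hdeg v
        omega
      by_cases hout : ∃ w ∈ G.neighborFinset v, w ∉ (Walk.cons h q).support
      · obtain ⟨w, hw, hws⟩ := hout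
        have hadj : G.Adj v w := by rwa [SimpleGraph.mem_neighborFinset] at hw
        refine ih (Walk.cons hadj.symm (Walk.cons h q)) ?_ (by simp) ?_
        · rw [Walk.cons_isPath_iff]; exact ⟨hp, hws⟩
        · rw [Walk.length_cons]; omega
      · push_neg at hout
        obtain ⟨w, hwmem, hwb⟩ :=
          Finset.exists_mem_ne
            (by rw [SimpleGraph.card_neighborFinset_eq_degree]; omega :
              1 < (G.neighborFinset v).card) b
        have hadj : G.Adj v w := by rwa [SimpleGraph.mem_neighborFinset] at hwmem
        have hws : w ∈ (Walk.cons h q).support := hout w hwmem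
        refine ⟨w, Walk.cons hadj.symm ((Walk.cons h q).takeUntil w hws), ?_⟩
        rw [Walk.cons_isCycle_iff]
        refine ⟨hp.takeUntil hws, ?_⟩
        intro hmem
        have hmem' := Walk.edges_takeUntil_subset (Walk.cons h q) hws hmem
        rw [Walk.edges_cons] at hmem'
        rcases List.mem_cons.mp hmem' with heq | hq'
        · rw [Sym2.eq_iff] at heq
          rcases heq with ⟨h1, -⟩ | ⟨h1, -⟩
          · exact hadj.ne h1.symm
          · exact hwb h1
        · have hvq : v ∈ q.support := Walk.snd_mem_support_of_mem_edges q hq'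
          rw [Walk.cons_isPath_iff] at hp
          exact hp.2 hvq



def delDec [DecidableEq V] (G : SimpleGraph V) [DecidableRel G.Adj] (s : Finset (Sym2 V)) :
    DecidableRel (G.deleteEdges ↑s).Adj := fun a b =>
  decidable_of_iff (G.Adj a b ∧ s(a, b) ∉ s) (by rw [SimpleGraph.deleteEdges_adj]; simp)

lemma del_nbr [Fintype V] [DecidableEq V] (G : SimpleGraph V) [DecidableRel G.Adj]
    (s : Finset (Sym2 V)) [DecidableRel (G.deleteEdges ↑s).Adj]
    (x : V) (hx : ∀ y, G.Adj x y → s(x, y) ∉ s) :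
    (G.deleteEdges ↑s).neighborFinset x = G.neighborFinset x := by
  ext y
  simp only [SimpleGraph.mem_neighborFinset, SimpleGraph.deleteEdges_adj, Finset.mem_coe]
  exact ⟨fun h => h.1, fun h => ⟨h, hx y h⟩⟩

lemma del_incidence [DecidableEq V] (G : SimpleGraph V) (s : Finset (Sym2 V)) (x : V) :
    (G.deleteEdges ↑s).incidenceSet x ⊆ G.incidenceSet x := by
  intro e he
  obtain ⟨hee, hxe⟩ := he
  rw [SimpleGraph.edgeSet_deleteEdges] at hee
  exact ⟨hee.1, hxe⟩

lemma del_not_mem [DecidableEq V] (G : SimpleGraph V) (s : Finset (Sym2 V)) (x : V)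
    {e : Sym2 V} (he : e ∈ (G.deleteEdges ↑s).incidenceSet x) : e ∉ s := by
  obtain ⟨hee, -⟩ := he
  rw [SimpleGraph.edgeSet_deleteEdges] at hee
  exact hee.2

lemma del_card_lt [Fintype V] [DecidableEq V] (G : SimpleGraph V) [DecidableRel G.Adj]
    (s : Finset (Sym2 V)) [DecidableRel (G.deleteEdges ↑s).Adj]
    {e : Sym2 V} (hes : e ∈ s) (heG : e ∈ G.edgeSet) :
    (G.deleteEdges ↑s).edgeFinset.card < G.edgeFinset.card := by
  apply Finset.card_lt_card
  constructor
  · intro a ha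
    rw [mem_edgeFinset, SimpleGraph.edgeSet_deleteEdges] at ha
    rw [mem_edgeFinset]
    exact ha.1
  · intro hsub
    have : e ∈ (G.deleteEdges ↑s).edgeFinset := hsub (mem_edgeFinset.mpr heG)
    rw [mem_edgeFinset, SimpleGraph.edgeSet_deleteEdges] at this
    exact this.2 hes

lemma no_edge [Fintype V] [DecidableEq V] (G : SimpleGraph V) [DecidableRel G.Adj]
    (h : G.edgeFinset.card = 0) (v : V) : ¬ 2 ≤ G.degree v := by
  intro hv
  have h1 : 0 < (G.neighborFinset v).card := by
    rw [SimpleGraph.card_neighborFinset_eq_degree]; omega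
  obtain ⟨w, hw⟩ := Finset.card_pos.mp h1
  have hadj : G.Adj v w := by rwa [SimpleGraph.mem_neighborFinset] at hw
  have hm : s(v, w) ∈ G.edgeFinset := by
    rw [SimpleGraph.mem_edgeFinset]; exact hadj
  rw [Finset.card_eq_zero] at h
  simp [h] at hm

lemma mix [Fintype V] [DecidableEq V] :
    ∀ (n : ℕ) (G : SimpleGraph V) [DecidableRel G.Adj] (χ : V → Bool),
      (∀ u v : V, G.Adj u v → χ u ≠ χ v) →
      G.edgeFinset.card ≤ n →
      ∃ f : Sym2 V → Bool, ∀ v, 2 ≤ G.degree v →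
        ∃ e1 ∈ G.incidenceSet v, ∃ e2 ∈ G.incidenceSet v, f e1 ≠ f e2 := by
  intro n
  induction n with
  | zero =>
    intro G inst χ hχ hcard
    exact ⟨fun _ => true, fun v hv => absurd hv (no_edge G (by omega) v)⟩
  | succ n ih =>
    intro G inst χ hχ hcard
    by_cases hpend : ∃ v, G.degree v = 1
    · -- pendant vertex case
      obtain ⟨v, hv1⟩ := hpend
      have hv1' : (G.neighborFinset v).card = 1 := hv1
      obtain ⟨w, hw⟩ := Finset.card_eq_one.mp hv1'
      have hwv : w ∈ G.neighborFinset v := hw ▸ Finset.mem_singleton_self w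
      have hadj : G.Adj v w := by rwa [SimpleGraph.mem_neighborFinset] at hwv
      set s : Finset (Sym2 V) := {s(v, w)} with hs
      letI instD := delDec G s
      set G' := G.deleteEdges ↑s with hG'
      have hlt : G'.edgeFinset.card < G.edgeFinset.card :=
        del_card_lt G s (Finset.mem_singleton_self s(v, w)) hadj
      have hχ' : ∀ a b, G'.Adj a b → χ a ≠ χ b := fun a b hab =>
        hχ a b ((SimpleGraph.deleteEdges_adj).mp hab).1
      obtain ⟨f', hf'⟩ := ih G' χ hχ' (by omega)
      have lift : ∀ (g : Sym2 V → Bool), (∀ e, e ∉ s → g e = f' e) → ∀ x, 2 ≤ G'.degree x →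
          ∃ e1 ∈ G.incidenceSet x, ∃ e2 ∈ G.incidenceSet x, g e1 ≠ g e2 := by
        intro g hg x hx
        obtain ⟨e1, he1, e2, he2, hne⟩ := hf' x hx
        exact ⟨e1, del_incidence G s x he1, e2, del_incidence G s x he2, by
          rw [hg _ (del_not_mem G s x he1), hg _ (del_not_mem G s x he2)]; exact hne⟩
      have hdeg_other : ∀ x, x ≠ v → x ≠ w → G'.degree x = G.degree x := by
        intro x hxv hxw
        have hside : ∀ y, G.Adj x y → s(x, y) ∉ s := by
          intro y hy hmem
          rw [hs, Finset.mem_singleton, Sym2.eq_iff] at hmem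
          rcases hmem with ⟨h1, -⟩ | ⟨h1, -⟩
          · exact hxv h1
          · exact hxw h1
        have hnn : G'.neighborFinset x = G.neighborFinset x := del_nbr G s x hside
        rw [← SimpleGraph.card_neighborFinset_eq_degree,
          ← SimpleGraph.card_neighborFinset_eq_degree, hnn]
      have hnw : G'.neighborFinset w = (G.neighborFinset w).erase v := by
        ext y
        rw [SimpleGraph.mem_neighborFinset, Finset.mem_erase, SimpleGraph.mem_neighborFinset]
        have hiff : G'.Adj w y ↔ G.Adj w y ∧ s(w, y) ∉ s := by
          rw [hG', SimpleGraph.deleteEdges_adj, Finset.mem_coe]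
        rw [hiff]
        constructor
        · rintro ⟨h1, h2⟩
          refine ⟨fun hyv => h2 ?_, h1⟩
          rw [hs, Finset.mem_singleton, hyv]
          exact Sym2.eq_swap
        · rintro ⟨h1, h2⟩
          refine ⟨h2, fun hmem => ?_⟩
          rw [hs, Finset.mem_singleton, Sym2.eq_iff] at hmem
          rcases hmem with ⟨hwv', -⟩ | ⟨-, hyv⟩
          · exact hadj.ne hwv'.symm
          · exact h1 hyv
      have hvmem : v ∈ G.neighborFinset w := by
        rw [SimpleGraph.mem_neighborFinset]; exact hadj.symm
      have hdegw : G.degree w = G'.degree w + 1 := by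
        have h1 := Finset.card_erase_of_mem hvmem
        have h2 : 0 < (G.neighborFinset w).card := Finset.card_pos.mpr ⟨v, hvmem⟩
        rw [← SimpleGraph.card_neighborFinset_eq_degree,
          ← SimpleGraph.card_neighborFinset_eq_degree, hnw]
        omega
      by_cases h2w : 2 ≤ G'.degree w
      · refine ⟨fun e => if e = s(v, w) then true else f' e, ?_⟩
        intro x hx
        by_cases hxv : x = v
        · exact absurd hx (by rw [hxv, hv1]; omega)
        · have hx' : 2 ≤ G'.degree x := by
            by_cases hxw : x = w
            · rw [hxw]; exact h2w
            · rw [hdeg_other x hxv hxw]; exact hx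
          refine lift _ ?_ x hx'
          intro e he
          rw [hs, Finset.mem_singleton] at he
          beta_reduce
          rw [if_neg he]
      · by_cases h1w : G'.degree w = 1
        · have h1w' : (G'.neighborFinset w).card = 1 := h1w
          obtain ⟨y, hy⟩ := Finset.card_eq_one.mp h1w'
          have hymem : y ∈ G'.neighborFinset w := hy ▸ Finset.mem_singleton_self y
          have hadj' : G'.Adj w y := by rwa [SimpleGraph.mem_neighborFinset] at hymem
          have hyne : s(w, y) ≠ s(v, w) := by
            have h2 := (SimpleGraph.deleteEdges_adj.mp hadj').2
            intro hcon
            exact h2 (by rw [hcon]; simp [hs])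
          refine ⟨fun e => if e = s(v, w) then !(f' s(w, y)) else f' e, ?_⟩
          intro x hx
          by_cases hxv : x = v
          · exact absurd hx (by rw [hxv, hv1]; omega)
          · by_cases hxw : x = w
            · subst hxw
              refine ⟨s(v, x), ⟨hadj, Sym2.mem_mk_right v x⟩, s(x, y),
                (G.mem_incidenceSet x y).mpr (SimpleGraph.deleteEdges_adj.mp hadj').1, ?_⟩
              beta_reduce
              rw [if_pos rfl, if_neg hyne]
              simp
            · have hx' : 2 ≤ G'.degree x := by rw [hdeg_other x hxv hxw]; exact hx
              refine lift _ ?_ x hx'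
              intro e he
              rw [hs, Finset.mem_singleton] at he
              beta_reduce
              rw [if_neg he]
        · have hgw1 : G.degree w = 1 := by omega
          refine ⟨fun e => if e = s(v, w) then true else f' e, ?_⟩
          intro x hx
          by_cases hxv : x = v
          · exact absurd hx (by rw [hxv, hv1]; omega)
          · by_cases hxw : x = w
            · exact absurd hx (by rw [hxw, hgw1]; omega)
            · have hx' : 2 ≤ G'.degree x := by rw [hdeg_other x hxv hxw]; exact hx
              refine lift _ ?_ x hx'
              intro e he
              rw [hs, Finset.mem_singleton] at he
              beta_reduce
              rw [if_neg he]
    · -- no pendant vertex: minimum degree ≥ 2 on the support, find a cycle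
      push_neg at hpend
      by_cases hedge : G.edgeFinset.Nonempty
      · obtain ⟨e0, he0⟩ := hedge
        induction e0 using Sym2.ind with
        | _ a b =>
        have hadj : G.Adj a b := by rwa [SimpleGraph.mem_edgeFinset] at he0
        have hpath : (Walk.cons hadj Walk.nil).IsPath := by
          rw [Walk.cons_isPath_iff]
          exact ⟨Walk.IsPath.nil, by simp [hadj.ne]⟩
        obtain ⟨r, c, hc⟩ := exists_cycle_aux G hpend (Fintype.card V)
          (Walk.cons hadj Walk.nil) hpath (by simp) (by simp)
        have htrail : c.edges.Nodup := hc.isTrail.edges_nodup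
        have h3 := hc.three_le_length
        have hdartsne : c.darts ≠ [] := by
          intro hcon
          have := c.length_darts
          rw [hcon] at this
          simp at this
          omega
        have hedgesne : c.edges ≠ [] := by
          intro hcon
          have : c.edges.length = c.length := c.length_edges
          rw [hcon] at this
          simp at this
          omega
        set s : Finset (Sym2 V) := c.edges.toFinset with hs
        letI instD := delDec G s
        set G' := G.deleteEdges ↑s with hG'
        have heC : c.edges.head hedgesne ∈ G.edgeSet :=
          c.edges_subset_edgeSet (List.head_mem hedgesne)
        have hlt : G'.edgeFinset.card < G.edgeFinset.card :=
          del_card_lt G s (by rw [hs, List.mem_toFinset]; exact List.head_mem hedgesne) heC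
        have hχ' : ∀ x y, G'.Adj x y → χ x ≠ χ y := fun x y hab =>
          hχ x y ((SimpleGraph.deleteEdges_adj).mp hab).1
        obtain ⟨f', hf'⟩ := ih G' χ hχ' (by omega)
        have lift : ∀ (g : Sym2 V → Bool), (∀ e, e ∉ s → g e = f' e) → ∀ x, 2 ≤ G'.degree x →
            ∃ e1 ∈ G.incidenceSet x, ∃ e2 ∈ G.incidenceSet x, g e1 ≠ g e2 := by
          intro g hg x hx
          obtain ⟨e1, he1, e2, he2, hne⟩ := hf' x hx
          exact ⟨e1, del_incidence G s x he1, e2, del_incidence G s x he2, by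
            rw [hg _ (del_not_mem G s x he1), hg _ (del_not_mem G s x he2)]; exact hne⟩
        refine ⟨fun e => if e ∈ c.edges then cycf χ c e else f' e, ?_⟩
        intro x hx
        by_cases hxs : x ∈ c.support
        · obtain ⟨⟨din, hdin, hdins⟩, dout, hdout, hdouts⟩ := closed_darts c hdartsne hxs
          have hein : din.edge ∈ c.edges := List.mem_map_of_mem (f := SimpleGraph.Dart.edge) hdin
          have heout : dout.edge ∈ c.edges := List.mem_map_of_mem (f := SimpleGraph.Dart.edge) hdout
          refine ⟨din.edge, ⟨c.edges_subset_edgeSet hein, ?_⟩,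
            dout.edge, ⟨c.edges_subset_edgeSet heout, ?_⟩, ?_⟩
          · rw [show din.edge = s(din.fst, din.snd) from rfl, ← hdins]
            exact Sym2.mem_mk_right _ _
          · rw [show dout.edge = s(dout.fst, dout.snd) from rfl, ← hdouts]
            exact Sym2.mem_mk_left _ _
          · beta_reduce
            rw [if_pos hein, if_pos heout, cycf_eq χ htrail hdin, cycf_eq χ htrail hdout, hdins]
            have hadj2 : G.Adj x dout.snd := hdouts ▸ dout.adj
            exact hχ x dout.snd hadj2
        · have hdx : G'.degree x = G.degree x := by
            have hside : ∀ y, G.Adj x y → s(x, y) ∉ s := by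
              intro y hy hmem
              rw [hs, List.mem_toFinset] at hmem
              exact hxs (c.fst_mem_support_of_mem_edges hmem)
            have hnn : G'.neighborFinset x = G.neighborFinset x := del_nbr G s x hside
            rw [← SimpleGraph.card_neighborFinset_eq_degree,
              ← SimpleGraph.card_neighborFinset_eq_degree, hnn]
          refine lift _ ?_ x (by rw [hdx]; exact hx)
          intro e he
          rw [hs, List.mem_toFinset] at he
          beta_reduce
          rw [if_neg he]
      · rw [Finset.not_nonempty_iff_eq_empty] at hedge
        exact ⟨fun _ => true, fun v hv => absurd hv (no_edge G (by rw [hedge]; simp) v)⟩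

end Stmt16Aux

theorem stmt_16 {V : Type*} [Fintype V] [DecidableEq V] (G : SimpleGraph V)
    [DecidableRel G.Adj] (V1 V2 : Set V)
    (hpart : ∀ v : V, (v ∈ V1 ∧ v ∉ V2) ∨ (v ∈ V2 ∧ v ∉ V1))
    (hbip : ∀ u v : V, G.Adj u v → (u ∈ V1 ∧ v ∈ V2) ∨ (u ∈ V2 ∧ v ∈ V1))
    (hconn : G.Connected) (hn : 3 ≤ Fintype.card V)
    (heven : Even (Nat.card V1))
    (ω0 : Sym2 V → ℕ)
    (hω0 : ∀ e ∈ G.edgeSet, ω0 e ∈ ({1, 2} : Set ℕ))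
    (hdist : ∀ u ∈ V1, ∀ w ∈ V2,
      ((∑ x ∈ G.neighborFinset u, ω0 s(u, x) : ℕ) : ZMod 2) ≠
      ((∑ x ∈ G.neighborFinset w, ω0 s(w, x) : ℕ) : ZMod 2)) :
    ∃ ω : Sym2 V → ℕ,
      (∀ e ∈ G.edgeSet, ω e ∈ Finset.Icc 1 4) ∧
      (∀ u v : V, G.Adj u v →
        (∑ x ∈ G.neighborFinset u, ω s(u, x)) ≠ ∑ x ∈ G.neighborFinset v, ω s(v, x)) ∧
      (∀ v : V, 2 ≤ G.degree v →
        ∃ e1 ∈ G.incidenceSet v, ∃ e2 ∈ G.incidenceSet v, ω e1 ≠ ω e2) := by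
  classical
  set χ : V → Bool := fun v => decide (v ∈ V1) with hχdef
  have hχ : ∀ u v : V, G.Adj u v → χ u ≠ χ v := by
    intro u v huv
    rcases hbip u v huv with ⟨hu1, hv2⟩ | ⟨hu2, hv1⟩
    · have hv1' : v ∉ V1 := by
        rcases hpart v with ⟨-, h⟩ | ⟨-, h⟩
        · exact absurd hv2 h
        · exact h
      simp [hχdef, hu1, hv1']
    · have hu1' : u ∉ V1 := by
        rcases hpart u with ⟨-, h⟩ | ⟨-, h⟩
        · exact absurd hu2 h
        · exact h
      simp [hχdef, hu1', hv1]
  obtain ⟨f, hf⟩ := Stmt16Aux.mix G.edgeFinset.card G χ hχ le_rfl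
  refine ⟨fun e => ω0 e + (if f e then 2 else 0), ?_, ?_, ?_⟩
  · intro e he
    have h12 : ω0 e = 1 ∨ ω0 e = 2 := by simpa using hω0 e he
    rw [Finset.mem_Icc]
    by_cases hb : f e <;> simp [hb] <;> omega
  · intro u v huv hEq
    have hdec : ∀ z : V,
        (∑ x ∈ G.neighborFinset z, (ω0 s(z, x) + (if f s(z, x) then 2 else 0)))
        = (∑ x ∈ G.neighborFinset z, ω0 s(z, x))
          + 2 * (∑ x ∈ G.neighborFinset z, (if f s(z, x) then 1 else 0)) := by
      intro z
      rw [Finset.sum_add_distrib, Finset.mul_sum]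
      congr 1
      apply Finset.sum_congr rfl
      intro x _
      split <;> simp
    have hcast : ∀ z : V,
        ((∑ x ∈ G.neighborFinset z, (ω0 s(z, x) + (if f s(z, x) then 2 else 0)) : ℕ) : ZMod 2)
        = ((∑ x ∈ G.neighborFinset z, ω0 s(z, x) : ℕ) : ZMod 2) := by
      intro z
      rw [hdec z]
      push_cast
      have h2 : ((2 : ℕ) : ZMod 2) = 0 := ZMod.natCast_self 2
      push_cast at h2
      rw [h2, zero_mul, add_zero]
    have hEq' : ((∑ x ∈ G.neighborFinset u, (ω0 s(u, x) + (if f s(u, x) then 2 else 0)) : ℕ))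
        = ((∑ x ∈ G.neighborFinset v, (ω0 s(v, x) + (if f s(v, x) then 2 else 0)) : ℕ)) := hEq
    rcases hbip u v huv with ⟨hu1, hv2⟩ | ⟨hu2, hv1⟩
    · exact hdist u hu1 v hv2 (by rw [← hcast u, ← hcast v, hEq'])
    · exact hdist v hv1 u hu2 (by rw [← hcast u, ← hcast v, hEq'])
  · intro v hv
    obtain ⟨e1, he1, e2, he2, hne⟩ := hf v hv
    refine ⟨e1, he1, e2, he2, ?_⟩
    have h1 : ω0 e1 = 1 ∨ ω0 e1 = 2 := by simpa using hω0 e1 (G.incidenceSet_subset v he1)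
    have h2 : ω0 e2 = 1 ∨ ω0 e2 = 2 := by simpa using hω0 e2 (G.incidenceSet_subset v he2)
    have key : ∀ a b : Sym2 V, ω0 a = 1 ∨ ω0 a = 2 → ω0 b = 1 ∨ ω0 b = 2 →
        f a = true → f b = false →
        ω0 a + (if f a then 2 else 0) ≠ ω0 b + (if f b then 2 else 0) := by
      intro a b ha hb hfa hfb
      rw [hfa, hfb]
      rcases ha with h | h <;> rcases hb with h' | h' <;> simp [h, h']
    cases hb1 : f e1 <;> cases hb2 : f e2
    · exact absurd (hb1.trans hb2.symm) hne
    · exact (key e2 e1 h2 h1 hb2 hb1).symm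
    · exact key e1 e2 h1 h2 hb1 hb2
    · exact absurd (hb1.trans hb2.symm) hne
end
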